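/- Suppose F : M × (0,T] → ℝ is smooth, satisfies ∂F/∂t ≤ ΔF − F² + K², and H(x,t) = c/φ(x)² + 1/t + K where φ is a positive function with |∇φ| ≤ A and |∇²φ| ≤ A/r, with c = (12 + 4√n)A². Then H satisfies ∂H/∂t > ΔH − H² + K² at every point where φ > 0. -/

import Mathlib

/-!
With `u = φ⁻¹` and `c = (12 + 4√n)A²`, the bounds `|Δφ| ≤ √n A/r` and `φ ≤ Ar` give
`-Δφ ≤ √n A² u`, so the chain rule bounds `ΔH` by `(6 + 2√n)A² c u⁴ < (c u²)²`.
Since `∂H/∂t = -t⁻²` and all three terms of `H = c u² + t⁻¹ + K` are nonnegative,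
`H² ≥ (c u²)² + t⁻² + K²`, and the inequality follows.
-/

open Real

lemma neg_le_mul_inv_of_abs_le_div {L s A r p : ℝ} (hs : 0 ≤ s) (hp : 0 < p)
    (hpAr : p ≤ A * r) (hL : |L| ≤ s * A / r) :
    -L ≤ s * A ^ 2 * p⁻¹ := by
  have hA : A ≠ 0 := by rintro rfl; linarith
  calc -L ≤ s * A / r := (neg_le_abs L).trans hL
    _ = s * A ^ 2 / (A * r) := by rw [← mul_div_mul_right (s * A) r hA]; ring
    _ ≤ s * A ^ 2 / p := div_le_div_of_nonneg_left (by positivity) hp hpAr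
    _ = s * A ^ 2 * p⁻¹ := div_eq_mul_inv _ _

lemma barrier_laplacian_lt_sq {s A u L G : ℝ} (hs : 0 ≤ s) (hA : A ≠ 0) (hu : 0 < u)
    (hL : -L ≤ s * A ^ 2 * u) (hG : G ≤ A ^ 2) :
    (12 + 4 * s) * A ^ 2 * (-2 * u ^ 3 * L + 6 * u ^ 4 * G)
      < ((12 + 4 * s) * A ^ 2 * u ^ 2) ^ 2 := by
  have hA2 : 0 < A ^ 2 := by positivity
  have hc : 0 < (12 + 4 * s) * A ^ 2 := by positivity
  have hinner : -2 * u ^ 3 * L + 6 * u ^ 4 * G < (12 + 4 * s) * A ^ 2 * u ^ 4 := by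
    have h3 : 0 < u ^ 3 := by positivity
    have h4 : 0 < u ^ 4 := by positivity
    nlinarith [mul_le_mul_of_nonneg_left hL h3.le, mul_le_mul_of_nonneg_left hG h4.le,
      mul_pos hA2 h4]
  calc (12 + 4 * s) * A ^ 2 * (-2 * u ^ 3 * L + 6 * u ^ 4 * G)
      < (12 + 4 * s) * A ^ 2 * ((12 + 4 * s) * A ^ 2 * u ^ 4) := mul_lt_mul_of_pos_left hinner hc
    _ = ((12 + 4 * s) * A ^ 2 * u ^ 2) ^ 2 := by ring

lemma neg_sq_gt_of_lt_sq {a b K Δ : ℝ} (ha : 0 ≤ a) (hb : 0 ≤ b) (hK : 0 ≤ K)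
    (hΔ : Δ < a ^ 2) :
    -b ^ 2 > Δ - (a + b + K) ^ 2 + K ^ 2 := by
  nlinarith [mul_nonneg ha hb, mul_nonneg ha hK, mul_nonneg hb hK]

lemma hasDerivAt_const_add_one_div_add (C K : ℝ) {t : ℝ} (ht : t ≠ 0) :
    HasDerivAt (fun s => C + 1 / s + K) (-(1 / t) ^ 2) t := by
  simpa [one_div, inv_pow] using ((hasDerivAt_inv ht).const_add C).add_const K

/-- `lap` is the Laplace–Beltrami operator, `gradφSq = |∇φ|²` and `lapφ = Δφ`; the chain rule
for `Δ(c φ⁻²)` and the bound `|Δφ| ≤ √n A/r` (from `|∇²φ| ≤ A/r`) are hypotheses. -/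
theorem barrier_supersolution_general
    (M : Type*) (n : ℕ) (lap : (M → ℝ) → M → ℝ)
    (φ gradφSq lapφ : M → ℝ) (A r K : ℝ) (x : M) (t : ℝ)
    (hK : 0 ≤ K) (ht : 0 < t)
    (hφpos : 0 < φ x) (hφub : φ x ≤ A * r)
    (hgradφ : gradφSq x ≤ A ^ 2)
    (hlapφ : |lapφ x| ≤ Real.sqrt n * A / r)
    (chainRule : ∀ s : ℝ,
      lap (fun y => (12 + 4 * Real.sqrt n) * A ^ 2 * (φ y) ^ (-2 : ℤ)
            + 1 / s + K) x =
        (12 + 4 * Real.sqrt n) * A ^ 2 *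
          (-2 * (φ x) ^ (-3 : ℤ) * lapφ x + 6 * (φ x) ^ (-4 : ℤ) * gradφSq x)) :
    deriv (fun s => (12 + 4 * Real.sqrt n) * A ^ 2 * (φ x) ^ (-2 : ℤ)
        + 1 / s + K) t >
      lap (fun y => (12 + 4 * Real.sqrt n) * A ^ 2 * (φ y) ^ (-2 : ℤ)
        + 1 / t + K) x
      - ((12 + 4 * Real.sqrt n) * A ^ 2 * (φ x) ^ (-2 : ℤ) + 1 / t + K) ^ 2
      + K ^ 2 := by
  rw [(hasDerivAt_const_add_one_div_add _ K ht.ne').deriv, chainRule t]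
  simp only [← inv_zpow', zpow_ofNat]
  have hA : A ≠ 0 := by rintro rfl; linarith
  have hlap := neg_le_mul_inv_of_abs_le_div (sqrt_nonneg n) hφpos hφub hlapφ
  refine neg_sq_gt_of_lt_sq (by positivity) (by positivity) hK ?_
  exact barrier_laplacian_lt_sq (sqrt_nonneg n) hA (inv_pos.mpr hφpos) hlap hgradφ

/-- barrier (strict supersolution) inequality for
`H(x,t) = c φ(x)⁻² + t⁻¹ + K` with `c = (12 + 4√n)A²`, where
`φ : M → (0, Ar]` is a cutoff with `|∇φ| ≤ A`, `|∇²φ| ≤ A/r` and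
`r ≤ 1/√K`.  The Riemannian structure is abstracted: `lap` is the
Laplace–Beltrami operator, `gradφSq = |∇φ|²`; the chain rule
`Δ(cφ⁻²) = c(-2φ⁻³ Δφ + 6φ⁻⁴ |∇φ|²)` and the bound `|Δφ| ≤ √n A/r`
(from `|∇²φ| ≤ A/r`) are hypotheses.  Conclusion:
`∂H/∂t > ΔH - H² + K²` wherever `φ > 0` and `t > 0`. -/
theorem barrier_supersolution
    (M : Type*) (n : ℕ) (lap : (M → ℝ) → M → ℝ)
    (φ gradφSq lapφ : M → ℝ) (A r K : ℝ) (x : M) (t : ℝ)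
    (hn : 1 ≤ n) (hA : 0 < A) (hr : 0 < r) (hK : 0 ≤ K) (ht : 0 < t)
    (hrK : r ≤ 1 / Real.sqrt K)
    (hφpos : 0 < φ x) (hφub : φ x ≤ A * r)
    (hgradφ : gradφSq x ≤ A ^ 2)
    (hlapφ : |lapφ x| ≤ Real.sqrt n * A / r)
    (chainRule : ∀ s : ℝ,
      lap (fun y => (12 + 4 * Real.sqrt n) * A ^ 2 * (φ y) ^ (-2 : ℤ)
            + 1 / s + K) x =
        (12 + 4 * Real.sqrt n) * A ^ 2 *
          (-2 * (φ x) ^ (-3 : ℤ) * lapφ x + 6 * (φ x) ^ (-4 : ℤ) * gradφSq x)) :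
    deriv (fun s => (12 + 4 * Real.sqrt n) * A ^ 2 * (φ x) ^ (-2 : ℤ)
        + 1 / s + K) t >
      lap (fun y => (12 + 4 * Real.sqrt n) * A ^ 2 * (φ y) ^ (-2 : ℤ)
        + 1 / t + K) x
      - ((12 + 4 * Real.sqrt n) * A ^ 2 * (φ x) ^ (-2 : ℤ) + 1 / t + K) ^ 2
      + K ^ 2 :=
  barrier_supersolution_general M n lap φ gradφSq lapφ A r K x t hK ht hφpos hφub hgradφ hlapφ
    chainRule
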